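/- arXiv:0802.3799 — 3 statements merged into one kernel-verified Lean document; each statement's English description precedes it below -/
import Mathlib

section
/- Suppose L, R : g → A are linear maps into a Lie Q-algebra A satisfying the generalized Maurer–Cartan equations: [L_x,L_y] = L_{[x,y]} − 2[L_x,R_y], [R_x,R_y] = R_{[y,x]} − 2[R_x,L_y], and [L_x,R_y] = [R_x,L_y] for all x,y. Then [L_x,L_y] = 2Y(x;y) + (1/3)L_{[x,y]} + (2/3)R_{[x,y]}, where 6·Y(x;y) := [L_x,L_y] + [R_x,R_y] + [L_x+R_x, L_y+R_y]. -/
/-!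
Expanding `⁅L x + R x, L y + R y⁆` with `⁅L x, R y⁆ = ⁅R x, L y⁆` gives
`6 Y(x;y) = 2 ⁅L x, L y⁆ + 2 ⁅R x, R y⁆ + 2 ⁅L x, R y⁆`. The second equation trades `⁅R x, R y⁆` for
`-R ⁅x, y⁆ - 2 ⁅L x, R y⁆`, and the first trades the remaining `-2 ⁅L x, R y⁆` for
`⁅L x, L y⁆ - L ⁅x, y⁆`, so that `6 Y(x;y) = 3 ⁅L x, L y⁆ - L ⁅x, y⁆ - 2 R ⁅x, y⁆`.
Only the final step divides, by `3`.
-/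

theorem three_smul_lie_eq_of_maurerCartan {K g A : Type*} [CommRing K] [LieRing g]
    [LieAlgebra K g] [LieRing A] [LieAlgebra K A] (L R : g →ₗ[K] A)
    (h1 : ∀ x y, ⁅L x, L y⁆ = L ⁅x, y⁆ - (2 : K) • ⁅L x, R y⁆)
    (h2 : ∀ x y, ⁅R x, R y⁆ = R ⁅y, x⁆ - (2 : K) • ⁅R x, L y⁆)
    (h3 : ∀ x y, ⁅L x, R y⁆ = ⁅R x, L y⁆) (x y : g) :
    (3 : K) • ⁅L x, L y⁆ = ⁅L x, L y⁆ + ⁅R x, R y⁆ + ⁅L x + R x, L y + R y⁆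
      + L ⁅x, y⁆ + (2 : K) • R ⁅x, y⁆ := by
  have hR : R ⁅y, x⁆ = -R ⁅x, y⁆ := by rw [← lie_skew, map_neg]
  rw [add_lie, lie_add, lie_add]
  linear_combination (norm := module)
    h1 x y - (2 : K) • h2 x y - (3 : K) • h3 x y - (2 : K) • hR

theorem stmt1 {g A : Type*} [LieRing g] [LieAlgebra ℚ g] [LieRing A] [LieAlgebra ℚ A]
    (L R : g →ₗ[ℚ] A) (Y : g → g → A)
    (hY : ∀ x y, (6 : ℚ) • Y x y =
      ⁅L x, L y⁆ + ⁅R x, R y⁆ + ⁅L x + R x, L y + R y⁆)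
    (h1 : ∀ x y, ⁅L x, L y⁆ = L ⁅x, y⁆ - (2 : ℚ) • ⁅L x, R y⁆)
    (h2 : ∀ x y, ⁅R x, R y⁆ = R ⁅y, x⁆ - (2 : ℚ) • ⁅R x, L y⁆)
    (h3 : ∀ x y, ⁅L x, R y⁆ = ⁅R x, L y⁆) :
    ∀ x y, ⁅L x, L y⁆ =
      (2 : ℚ) • Y x y + (1/3 : ℚ) • L ⁅x, y⁆ + (2/3 : ℚ) • R ⁅x, y⁆ := by
  intro x y
  have key := three_smul_lie_eq_of_maurerCartan L R h1 h2 h3 x y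
  rw [← hY] at key
  linear_combination (norm := module) (1 / 3 : ℚ) • key
end

section
/- Under the generalized Maurer–Cartan equations [L_x,L_y] = L_{[x,y]} − 2[L_x,R_y], [R_x,R_y] = R_{[y,x]} − 2[R_x,L_y], [L_x,R_y] = [R_x,L_y], one has [L_x,R_y] = −Y(x;y) + (1/3)L_{[x,y]} − (1/3)R_{[x,y]}. -/
theorem stmt2 {g A : Type*} [LieRing g] [LieAlgebra ℚ g] [LieRing A] [LieAlgebra ℚ A]
    (L R : g →ₗ[ℚ] A) (Y : g → g → A)
    (hY : ∀ x y, (6 : ℚ) • Y x y =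
      ⁅L x, L y⁆ + ⁅R x, R y⁆ + ⁅L x + R x, L y + R y⁆)
    (h1 : ∀ x y, ⁅L x, L y⁆ = L ⁅x, y⁆ - (2 : ℚ) • ⁅L x, R y⁆)
    (h2 : ∀ x y, ⁅R x, R y⁆ = R ⁅y, x⁆ - (2 : ℚ) • ⁅R x, L y⁆)
    (h3 : ∀ x y, ⁅L x, R y⁆ = ⁅R x, L y⁆) :
    ∀ x y, ⁅L x, R y⁆ =
      -Y x y + (1/3 : ℚ) • L ⁅x, y⁆ - (1/3 : ℚ) • R ⁅x, y⁆ := by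
  intro x y
  have hR_skew : R ⁅y, x⁆ = -R ⁅x, y⁆ := by rw [← lie_skew, map_neg]
  have hY_expand : (6 : ℚ) • Y x y =
      (2 : ℚ) • L ⁅x, y⁆ - (2 : ℚ) • R ⁅x, y⁆ - (6 : ℚ) • ⁅L x, R y⁆ := by
    rw [hY, lie_add, add_lie, add_lie, h1, h2, ← h3 x y, hR_skew]
    module
  linear_combination (norm := module) (1 / 6 : ℚ) • hY_expand
end

section
/- Under the generalized Maurer–Cartan equations [L_x,L_y] = L_{[x,y]} − 2[L_x,R_y], [R_x,R_y] = R_{[y,x]} − 2[R_x,L_y], [L_x,R_y] = [R_x,L_y], one has [R_x,R_y] = 2Y(x;y) − (2/3)L_{[x,y]} − (1/3)R_{[x,y]}. -/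
/-! With `c = ⁅L x, R y⁆ = ⁅R x, L y⁆` the definition of `Y` reads
`3 Y = ⁅L x, L y⁆ + ⁅R x, R y⁆ + c`, while the first two equations give
`⁅L x, L y⁆ = L ⁅x, y⁆ - 2 c` and `⁅R x, R y⁆ = -R ⁅x, y⁆ - 2 c`.
Eliminating `⁅L x, L y⁆` and `c` from these three linear relations leaves the claim. -/

theorem lie_add_add_of_lie_eq {A : Type*} [LieRing A] {a b c d : A} (h : ⁅a, d⁆ = ⁅b, c⁆) :
    ⁅a + b, c + d⁆ = ⁅a, c⁆ + ⁅b, d⁆ + 2 • ⁅a, d⁆ := by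
  rw [add_lie, lie_add, lie_add, ← h]
  abel

theorem stmt3 {g A : Type*} [LieRing g] [LieAlgebra ℚ g] [LieRing A] [LieAlgebra ℚ A]
    (L R : g →ₗ[ℚ] A) (Y : g → g → A)
    (hY : ∀ x y, (6 : ℚ) • Y x y =
      ⁅L x, L y⁆ + ⁅R x, R y⁆ + ⁅L x + R x, L y + R y⁆)
    (h1 : ∀ x y, ⁅L x, L y⁆ = L ⁅x, y⁆ - (2 : ℚ) • ⁅L x, R y⁆)
    (h2 : ∀ x y, ⁅R x, R y⁆ = R ⁅y, x⁆ - (2 : ℚ) • ⁅R x, L y⁆)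
    (h3 : ∀ x y, ⁅L x, R y⁆ = ⁅R x, L y⁆) :
    ∀ x y, ⁅R x, R y⁆ =
      (2 : ℚ) • Y x y - (2/3 : ℚ) • L ⁅x, y⁆ - (1/3 : ℚ) • R ⁅x, y⁆ := by
  intro x y
  have hsum := lie_add_add_of_lie_eq (h3 x y)
  have hRR : ⁅R x, R y⁆ = -R ⁅x, y⁆ - (2 : ℚ) • ⁅L x, R y⁆ := by
    rw [h2, ← lie_skew, map_neg, h3]
  linear_combination (norm := module)
    (-1/3 : ℚ) • hY x y - (1/3 : ℚ) • hsum - (2/3 : ℚ) • h1 x y + (1/3 : ℚ) • hRR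
end
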